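/- arXiv:2408.08994 — 2 statements merged into one kernel-verified Lean document; each statement's English description precedes it below -/
import Mathlib

section
/- Let X be a finite set and n ≥ 1. For each i ∈ {1,…,n}, let p_i and q_i be probability mass functions on X and let v_i : X → ℝ satisfy 0 ≤ v_i(x) ≤ 1 for all x. Then ∑_{i=1}^n |E_{p_i}[v_i] − E_{q_i}[v_i]| ≤ 8·√( (∑_{i=1}^n Var_{p_i}(v_i)) · (∑_{i=1}^n H²(p_i‖q_i)) ) + 20·∑_{i=1}^n H²(p_i‖q_i). (This is the deterministic core of the paper's 'bound of sum of mean value differences' lemmas for online and offline RL.) -/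
open Finset

/-- `p` is a probability mass function on the finite set `X`. -/
def IsPMF {X : Type*} [Fintype X] (p : X → ℝ) : Prop :=
  (∀ x, 0 ≤ p x) ∧ ∑ x, p x = 1

/-- Expectation of `v` under `p`. -/
noncomputable def expect {X : Type*} [Fintype X] (p v : X → ℝ) : ℝ := ∑ x, p x * v x

/-- Variance of `v` under `p`. -/
noncomputable def pmfVar {X : Type*} [Fintype X] (p v : X → ℝ) : ℝ :=
  ∑ x, p x * (v x - expect p v) ^ 2

/-- Squared Hellinger distance `H²(p‖q)`. -/
noncomputable def hellingerSq {X : Type*} [Fintype X] (p q : X → ℝ) : ℝ :=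
  (1 / 2) * ∑ x, (Real.sqrt (p x) - Real.sqrt (q x)) ^ 2

lemma hellingerSq_nonneg {X : Type*} [Fintype X] (p q : X → ℝ) : 0 ≤ hellingerSq p q := by
  unfold hellingerSq
  positivity

lemma pmfVar_nonneg {X : Type*} [Fintype X] (p v : X → ℝ) (hp : IsPMF p) :
    0 ≤ pmfVar p v :=
  Finset.sum_nonneg fun x _ => mul_nonneg (hp.1 x) (sq_nonneg _)

lemma key_bound {X : Type*} [Fintype X] (p q v : X → ℝ)
    (hp : IsPMF p) (hq : IsPMF q) (hv : ∀ x, 0 ≤ v x ∧ v x ≤ 1) :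
    |expect p v - expect q v| ≤
      4 * Real.sqrt (pmfVar p v * hellingerSq p q) + 5 * hellingerSq p q := by
  obtain ⟨hp0, hp1⟩ := hp
  obtain ⟨hq0, hq1⟩ := hq
  set μ := expect p v with hμ
  set w : X → ℝ := fun x => v x - μ with hw
  have hμ0 : 0 ≤ μ := Finset.sum_nonneg fun x _ => mul_nonneg (hp0 x) (hv x).1
  have hμ1 : μ ≤ 1 := by
    calc μ ≤ ∑ x, p x * 1 :=
          Finset.sum_le_sum fun x _ => mul_le_mul_of_nonneg_left (hv x).2 (hp0 x)
      _ = 1 := by simpa using hp1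
  have hw1 : ∀ x, (w x) ^ 2 ≤ 1 := by
    intro x
    have h1 := (hv x).1; have h2 := (hv x).2
    simp only [hw]
    nlinarith
  set D := ∑ x, (Real.sqrt (p x) - Real.sqrt (q x)) ^ 2 with hD
  have hD0 : 0 ≤ D := Finset.sum_nonneg fun x _ => sq_nonneg _
  have hA' : pmfVar p v = ∑ x, p x * (w x) ^ 2 := rfl
  set A := ∑ x, p x * (w x) ^ 2 with hA
  have hA0 : 0 ≤ A := Finset.sum_nonneg fun x _ => mul_nonneg (hp0 x) (sq_nonneg _)
  set B := ∑ x, q x * (w x) ^ 2 with hB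
  have hB0 : 0 ≤ B := Finset.sum_nonneg fun x _ => mul_nonneg (hq0 x) (sq_nonneg _)
  have hsp : ∀ x, Real.sqrt (p x) ^ 2 = p x := fun x => Real.sq_sqrt (hp0 x)
  have hsq : ∀ x, Real.sqrt (q x) ^ 2 = q x := fun x => Real.sq_sqrt (hq0 x)
  -- generic Cauchy–Schwarz step
  have key : ∀ u : X → ℝ, (∀ x, (u x) ^ 2 ≤ (w x) ^ 2) →
      |∑ x, (p x - q x) * u x| ≤ Real.sqrt D * Real.sqrt (2 * (A + B)) := by
    intro u hu
    have h1 : ∑ x, (p x - q x) * u x =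
        ∑ x, (Real.sqrt (p x) - Real.sqrt (q x)) *
          ((Real.sqrt (p x) + Real.sqrt (q x)) * u x) := by
      refine Finset.sum_congr rfl fun x _ => ?_
      have e1 := hsp x; have e2 := hsq x
      linear_combination (-(u x)) * e1 + u x * e2
    have hb : ∑ x, ((Real.sqrt (p x) + Real.sqrt (q x)) * u x) ^ 2 ≤ 2 * (A + B) := by
      have hpt : ∀ x, ((Real.sqrt (p x) + Real.sqrt (q x)) * u x) ^ 2 ≤
          2 * (p x * (w x) ^ 2 + q x * (w x) ^ 2) := by
        intro x
        have e1 := hsp x; have e2 := hsq x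
        have h3 := hu x
        have h4 : (0:ℝ) ≤ Real.sqrt (p x) := Real.sqrt_nonneg _
        have h5 : (0:ℝ) ≤ Real.sqrt (q x) := Real.sqrt_nonneg _
        nlinarith [sq_nonneg (Real.sqrt (p x) - Real.sqrt (q x)), sq_nonneg (u x),
          mul_nonneg (mul_nonneg h4 h5) (sq_nonneg (u x)),
          sq_nonneg (Real.sqrt (p x) + Real.sqrt (q x))]
      calc ∑ x, ((Real.sqrt (p x) + Real.sqrt (q x)) * u x) ^ 2
          ≤ ∑ x, 2 * (p x * (w x) ^ 2 + q x * (w x) ^ 2) :=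
            Finset.sum_le_sum fun x _ => hpt x
        _ = 2 * (A + B) := by
            rw [← Finset.mul_sum, Finset.sum_add_distrib]
    rw [h1, ← Real.sqrt_sq_eq_abs]
    have h2 := sum_mul_sq_le_sq_mul_sq Finset.univ
      (fun x => Real.sqrt (p x) - Real.sqrt (q x))
      (fun x => (Real.sqrt (p x) + Real.sqrt (q x)) * u x)
    calc Real.sqrt ((∑ x, (Real.sqrt (p x) - Real.sqrt (q x)) *
            ((Real.sqrt (p x) + Real.sqrt (q x)) * u x)) ^ 2)
        ≤ Real.sqrt (D * (2 * (A + B))) := by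
          refine Real.sqrt_le_sqrt (h2.trans ?_)
          rw [← hD]
          exact mul_le_mul_of_nonneg_left hb hD0
      _ = Real.sqrt D * Real.sqrt (2 * (A + B)) := Real.sqrt_mul hD0 _
  -- main difference in terms of w
  have hdiff : μ - _root_.expect q v = ∑ x, (p x - q x) * w x := by
    have e : ∀ x, (p x - q x) * w x =
        p x * v x - q x * v x - (p x * μ - q x * μ) := by
      intro x; simp only [hw]; ring
    rw [Finset.sum_congr rfl fun x _ => e x]
    rw [Finset.sum_sub_distrib, Finset.sum_sub_distrib, Finset.sum_sub_distrib,
      ← Finset.sum_mul, ← Finset.sum_mul, hp1, hq1]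
    simp only [hμ, _root_.expect]
    ring
  have hmain : |μ - _root_.expect q v| ≤ Real.sqrt D * Real.sqrt (2 * (A + B)) := by
    rw [hdiff]; exact key w fun x => le_refl _
  have hBA : |A - B| ≤ Real.sqrt D * Real.sqrt (2 * (A + B)) := by
    have h1 : A - B = ∑ x, (p x - q x) * (w x) ^ 2 := by
      rw [hA, hB, ← Finset.sum_sub_distrib]
      exact Finset.sum_congr rfl fun x _ => by ring
    rw [h1]
    refine key (fun x => (w x) ^ 2) fun x => ?_
    show ((w x) ^ 2) ^ 2 ≤ (w x) ^ 2
    nlinarith [hw1 x, sq_nonneg (w x)]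
  set t := Real.sqrt D * Real.sqrt (2 * (A + B)) with htdef
  have ht0 : 0 ≤ t := mul_nonneg (Real.sqrt_nonneg _) (Real.sqrt_nonneg _)
  have ht2 : t ^ 2 = 2 * D * (A + B) := by
    rw [htdef, mul_pow, Real.sq_sqrt hD0, Real.sq_sqrt (by linarith : (0:ℝ) ≤ 2 * (A + B))]
    ring
  have hBle : B ≤ A + t := by
    have := abs_le.mp hBA
    linarith [this.1]
  have ht_le : t ≤ 2 * D + (A + B) / 4 := by
    nlinarith [sq_nonneg (2 * D - (A + B) / 4), sq_nonneg (2 * D + (A + B) / 4 + t)]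
  have hS : A + B ≤ 3 * A + 3 * D := by linarith
  -- relate H and D
  have hH : hellingerSq p q = D / 2 := by
    rw [hellingerSq, ← hD]; ring
  rw [hA', hH]
  set s := Real.sqrt (A * (D / 2)) with hsdef
  have hs0 : 0 ≤ s := Real.sqrt_nonneg _
  have hs2 : s ^ 2 = A * (D / 2) := Real.sq_sqrt (by positivity)
  have hRHS0 : 0 ≤ 4 * s + 5 * (D / 2) := by positivity
  have h5 : t ^ 2 ≤ 6 * (A * D) + 6 * D ^ 2 := by
    rw [ht2]
    have := mul_le_mul_of_nonneg_left hS (by linarith : (0:ℝ) ≤ 2 * D)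
    nlinarith [this]
  have h6 : t ^ 2 ≤ (4 * s + 5 * (D / 2)) ^ 2 := by
    have hexp : (4 * s + 5 * (D / 2)) ^ 2 = 16 * s ^ 2 + 20 * (s * D) + 25 / 4 * D ^ 2 := by
      ring
    rw [hexp, hs2]
    have h7 : (0:ℝ) ≤ A * D := mul_nonneg hA0 hD0
    have h8 : (0:ℝ) ≤ s * D := mul_nonneg hs0 hD0
    have h9 : 16 * (A * (D / 2)) = 8 * (A * D) := by ring
    have h10 : (0:ℝ) ≤ D ^ 2 := sq_nonneg D
    linarith
  have htRHS : t ≤ 4 * s + 5 * (D / 2) := by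
    have := Real.sqrt_le_sqrt h6
    rwa [Real.sqrt_sq ht0, Real.sqrt_sq hRHS0] at this
  calc |μ - _root_.expect q v| ≤ t := hmain
    _ ≤ 4 * s + 5 * (D / 2) := htRHS

/-- For pmfs `p_i, q_i` on a finite set `X` and `v_i : X → [0,1]`,
`∑_i |E_{p_i}[v_i] − E_{q_i}[v_i]|
  ≤ 8·√((∑_i Var_{p_i}(v_i))·(∑_i H²(p_i‖q_i))) + 20·∑_i H²(p_i‖q_i)`. -/
theorem sum_mean_diff_le {X : Type*} [Fintype X] (n : ℕ) (hn : 1 ≤ n)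
    (p q v : Fin n → X → ℝ)
    (hp : ∀ i, IsPMF (p i)) (hq : ∀ i, IsPMF (q i))
    (hv : ∀ i x, 0 ≤ v i x ∧ v i x ≤ 1) :
    ∑ i, |expect (p i) (v i) - expect (q i) (v i)| ≤
      8 * Real.sqrt ((∑ i, pmfVar (p i) (v i)) * (∑ i, hellingerSq (p i) (q i))) +
        20 * ∑ i, hellingerSq (p i) (q i) := by
  have hstep : ∑ i, |expect (p i) (v i) - expect (q i) (v i)| ≤
      ∑ i, (4 * Real.sqrt (pmfVar (p i) (v i) * hellingerSq (p i) (q i)) +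
        5 * hellingerSq (p i) (q i)) :=
    Finset.sum_le_sum fun i _ => key_bound (p i) (q i) (v i) (hp i) (hq i) (hv i)
  rw [Finset.sum_add_distrib, ← Finset.mul_sum, ← Finset.mul_sum] at hstep
  have hcs : ∑ i, Real.sqrt (pmfVar (p i) (v i) * hellingerSq (p i) (q i)) ≤
      Real.sqrt ((∑ i, pmfVar (p i) (v i)) * (∑ i, hellingerSq (p i) (q i))) := by
    have e : ∀ i : Fin n, Real.sqrt (pmfVar (p i) (v i) * hellingerSq (p i) (q i)) =
        Real.sqrt (pmfVar (p i) (v i)) * Real.sqrt (hellingerSq (p i) (q i)) := fun i =>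
      Real.sqrt_mul (pmfVar_nonneg _ _ (hp i)) _
    rw [Finset.sum_congr rfl fun i _ => e i]
    refine (Real.sum_sqrt_mul_sqrt_le _ (fun i => pmfVar_nonneg _ _ (hp i))
      (fun i => hellingerSq_nonneg _ _)).trans ?_
    rw [← Real.sqrt_mul (Finset.sum_nonneg fun i _ => pmfVar_nonneg _ _ (hp i))]
  have hHn : 0 ≤ ∑ i, hellingerSq (p i) (q i) :=
    Finset.sum_nonneg fun i _ => hellingerSq_nonneg _ _
  have hsqrt0 : 0 ≤ Real.sqrt ((∑ i, pmfVar (p i) (v i)) * (∑ i, hellingerSq (p i) (q i))) :=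
    Real.sqrt_nonneg _
  linarith
end

section
/- Let X be a nonempty set and Ψ a nonempty set of functions g : X → [0,1]. Let η > 1, K ≥ 1, H ≥ 1, points x_h^k ∈ X for k ∈ {1,…,K} and h ∈ {1,…,H}, and functions g^1,…,g^K ∈ Ψ such that for every k ∈ {1,…,K}, ∑_{i=1}^{k−1} ∑_{h=1}^{H} g^k(x_h^i) ≤ η. Suppose d ∈ ℕ is such that the ℓ1-Eluder dimension of Ψ at scale 1/(8ηKH) is at most d. Then there exists a set 𝒦 ⊆ {1,…,K} with |𝒦| ≤ 13·(log₂(4ηKH))²·d such that ∑_{k∉𝒦} ∑_{h=1}^{H} g^k(x_h^k) ≤ d·(2 + 7η·log₂(KH)) + 1. (New Eluder Pigeon Lemma.) -/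
open Finset

/-- A finite sequence `a : Fin m → X` is `ε`-independent for `Ψ` if for every index `i`
there is `g ∈ Ψ` with `∑_{j<i} |g (a j)| ≤ ε` and `|g (a i)| > ε`. -/
def IsEpsIndep {X : Type*} (Ψ : Set (X → ℝ)) (ε : ℝ) {m : ℕ} (a : Fin m → X) : Prop :=
  ∀ i : Fin m, ∃ g ∈ Ψ, (∑ j ∈ Finset.Iio i, |g (a j)|) ≤ ε ∧ ε < |g (a i)|

/-- The ℓ1-Eluder dimension of `Ψ` at scale `ε₀` is at most `d`: for every `ε ≥ ε₀`,
every `ε`-independent sequence for `Ψ` has length at most `d`. -/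
def EluderDimLE {X : Type*} (Ψ : Set (X → ℝ)) (ε₀ : ℝ) (d : ℕ) : Prop :=
  ∀ ε ≥ ε₀, ∀ m : ℕ, ∀ a : Fin m → X, IsEpsIndep Ψ ε a → m ≤ d

/-!
Split the values `g k (x k h)` into the dyadic shells `(2^{-l-1}, 2^{-l}]`, `l < ⌈log₂ KH⌉`;
the smaller values add up to at most `1`. Order all points chronologically. Within one shell,
take a set of points in which no episode has more than about `η 2^l / 2` points. For each
point `i` of episode `k`, the earlier points carry `g k`-mass at most `η` from earlier episodes
and `η / 2` from episode `k` itself, while `g k (x i) > 2^{-l-1}`. Greedily colouring the points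
with about `3 η 2^l` colours so that every point has `g k`-mass at most `2^{-l-1}` on earlier points
of its own colour makes each colour class a `2^{-l-1}`-independent sequence, so the set has at
most `(3 η 2^l + 1) d` points. Applied to `⌊η 2^l / 2⌋ + 1` points from each episode that is
heavy in the shell, this bounds the number of heavy episodes by `8 d`; applied to all points of
light episodes, it bounds their mass in the shell by `3 η d + 2^{-l} d`. `𝒦` is the set of
episodes heavy in some shell.
-/

section Eluder

variable {X ι : Type*} [LinearOrder ι] {Ψ : Set (X → ℝ)} {ε₀ ε : ℝ} {d : ℕ}

theorem sum_Iio_orderEmbOfFin {M : Type*} [AddCommMonoid M] (s : Finset ι) (f : ι → M)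
    (i : Fin #s) :
    ∑ j ∈ Iio i, f (s.orderEmbOfFin rfl j) = ∑ t ∈ s with t < s.orderEmbOfFin rfl i, f t := by
  have hmap :
      (Iio i).map (s.orderEmbOfFin rfl).toEmbedding = {t ∈ s | t < s.orderEmbOfFin rfl i} := by
    ext t
    simp only [mem_map, mem_Iio, mem_filter, RelEmbedding.coe_toEmbedding]
    constructor
    · rintro ⟨j, hj, rfl⟩
      exact ⟨s.orderEmbOfFin_mem rfl j, (s.orderEmbOfFin rfl).lt_iff_lt.mpr hj⟩
    · rintro ⟨ht, hlt⟩
      obtain ⟨j, rfl⟩ : t ∈ Set.range (s.orderEmbOfFin rfl) := by rwa [range_orderEmbOfFin]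
      exact ⟨j, (s.orderEmbOfFin rfl).lt_iff_lt.mp hlt, rfl⟩
  rw [← hmap, sum_map]
  rfl

theorem EluderDimLE.card_le (hd : EluderDimLE Ψ ε₀ d) (hε : ε₀ ≤ ε) {s : Finset ι}
    {a : ι → X}
    (hs : ∀ i ∈ s, ∃ φ ∈ Ψ, ∑ j ∈ s with j < i, |φ (a j)| ≤ ε ∧ ε < |φ (a i)|) :
    #s ≤ d := by
  refine hd ε hε _ (a ∘ s.orderEmbOfFin rfl) fun i => ?_
  obtain ⟨φ, hφ, hprev, hself⟩ := hs _ (s.orderEmbOfFin_mem rfl i)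
  exact ⟨φ, hφ, by rwa [Function.comp_def, sum_Iio_orderEmbOfFin s (fun t => |φ (a t)|)], hself⟩

theorem exists_coloring_sum_lt_le {N : ℕ} {B : ℝ} (hB : B < N * ε)
    (w : ι → ι → ℝ) (s : Finset ι) (hw : ∀ i ∈ s, ∑ j ∈ s with j < i, w i j ≤ B) :
    ∃ c : ι → ℕ, (∀ i ∈ s, c i < N) ∧ ∀ i ∈ s, ∑ j ∈ s with j < i ∧ c j = c i, w i j ≤ ε := by
  induction s using Finset.induction_on_max with
  | empty => exact ⟨0, by simp, by simp⟩
  | insert a s hlt ih =>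
    have ha : a ∉ s := fun h => lt_irrefl a (hlt a h)
    have hlate (i : ι) (hi : i ∈ s) : ¬ a < i := (lt_asymm (hlt i hi) ·)
    obtain ⟨c, hcN, hc⟩ := ih fun i hi => by
      simpa [filter_insert, hlate i hi] using hw i (mem_insert_of_mem hi)
    -- `a` comes after all of `s`, so its total weight `≤ B < N ε` leaves some class below `ε`
    obtain ⟨m, hm, hmε⟩ : ∃ m ∈ range N, ∑ j ∈ s with c j = m, w a j < ε := by
      refine exists_lt_of_sum_lt ?_
      rw [sum_fiberwise_of_maps_to fun j hj => mem_range.mpr (hcN j hj), sum_const, card_range,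
        nsmul_eq_mul]
      refine lt_of_le_of_lt ?_ hB
      simpa [filter_insert, filter_true_of_mem hlt, ha] using hw a (mem_insert_self a s)
    refine ⟨Function.update c a m, ?_, ?_⟩
    · intro i hi
      rcases mem_insert.mp hi with rfl | hi
      · simpa using hm
      · simpa [Function.update_of_ne (ne_of_lt (hlt i hi))] using hcN i hi
    · intro i hi
      rcases mem_insert.mp hi with rfl | hi
      · rw [filter_insert, if_neg (by simp), filter_congr (q := (c · = m)) fun j hj => by
          simp [Function.update_of_ne (ne_of_lt (hlt j hj)), hlt j hj]]
        exact hmε.le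
      · rw [filter_insert, if_neg (by simp [hlate i hi]),
          filter_congr (q := fun j => j < i ∧ c j = c i) fun j hj => by
          simp [Function.update_of_ne (ne_of_lt (hlt j hj)),
            Function.update_of_ne (ne_of_lt (hlt i hi))]]
        exact hc i hi

theorem EluderDimLE.card_le_mul (hd : EluderDimLE Ψ ε₀ d) (hε : ε₀ ≤ ε) {N : ℕ} {B : ℝ}
    (hB : B < N * ε) {s : Finset ι} {a : ι → X} {φ : ι → X → ℝ} (hφ : ∀ i ∈ s, φ i ∈ Ψ)
    (hprev : ∀ i ∈ s, ∑ j ∈ s with j < i, |φ i (a j)| ≤ B) (hself : ∀ i ∈ s, ε < |φ i (a i)|) :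
    #s ≤ N * d := by
  obtain ⟨c, hcN, hc⟩ := exists_coloring_sum_lt_le hB (fun i j => |φ i (a j)|) s hprev
  calc #s = ∑ m ∈ range N, #{i ∈ s | c i = m} :=
        card_eq_sum_card_fiberwise fun i hi => mem_range.mpr (hcN i hi)
    _ ≤ ∑ _m ∈ range N, d := sum_le_sum fun m _ => hd.card_le hε fun i him => by
        obtain ⟨hi, rfl⟩ := mem_filter.mp him
        refine ⟨φ i, hφ i hi, ?_, hself i hi⟩
        simpa only [filter_filter, and_comm] using hc i hi
    _ = N * d := by simp

end Eluder

abbrev dyadicShell (l : ℕ) : Set ℝ := Set.Ioc ((2 : ℝ) ^ (l + 1))⁻¹ ((2 : ℝ) ^ l)⁻¹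

theorem sum_eq_sum_le_add_sum_dyadicShell {ι : Type*} {s : Finset ι} {f : ι → ℝ}
    (hf : ∀ i ∈ s, f i ≤ 1) (L : ℕ) :
    ∑ i ∈ s, f i = ∑ i ∈ s with f i ≤ ((2 : ℝ) ^ L)⁻¹, f i +
      ∑ l ∈ range L, ∑ i ∈ s with f i ∈ dyadicShell l, f i := by
  induction L with
  | zero => simp [filter_true_of_mem hf]
  | succ L ih =>
    rw [ih, sum_range_succ, ← sum_filter_add_sum_filter_not {i ∈ s | f i ≤ ((2 : ℝ) ^ L)⁻¹}
      (f · ≤ ((2 : ℝ) ^ (L + 1))⁻¹), filter_filter, filter_filter]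
    have hle : ((2 : ℝ) ^ (L + 1))⁻¹ ≤ ((2 : ℝ) ^ L)⁻¹ :=
      inv_anti₀ (by positivity) (pow_le_pow_right₀ one_le_two L.le_succ)
    rw [filter_congr fun i _ => show f i ≤ ((2 : ℝ) ^ L)⁻¹ ∧ f i ≤ ((2 : ℝ) ^ (L + 1))⁻¹ ↔
      f i ≤ ((2 : ℝ) ^ (L + 1))⁻¹ from ⟨And.right, fun h => ⟨h.trans hle, h⟩⟩,
      filter_congr fun i _ => show f i ≤ ((2 : ℝ) ^ L)⁻¹ ∧ ¬ f i ≤ ((2 : ℝ) ^ (L + 1))⁻¹ ↔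
      f i ∈ dyadicShell L from ⟨fun h => ⟨not_le.mp h.2, h.1⟩, fun h => ⟨h.2, not_le.mpr h.1⟩⟩]
    ring

theorem sum_filter_le_inv_two_pow_clog_card_le_one {ι : Type*} [Fintype ι] (s : Finset ι)
    (f : ι → ℝ) : ∑ i ∈ s with f i ≤ ((2 : ℝ) ^ Nat.clog 2 (Fintype.card ι))⁻¹, f i ≤ 1 := by
  refine (sum_le_card_nsmul _ _ _ fun i hi => (mem_filter.mp hi).2).trans ?_
  calc _ ≤ Fintype.card ι * ((2 : ℝ) ^ Nat.clog 2 (Fintype.card ι))⁻¹ := by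
        rw [nsmul_eq_mul]
        gcongr
        exact card_le_univ _
    _ ≤ 1 := by
        rw [← div_eq_mul_inv, div_le_one (by positivity)]
        exact_mod_cast Nat.le_pow_clog one_lt_two _

theorem sum_geometric_inv_two_le (n : ℕ) : ∑ l ∈ range n, ((2 : ℝ) ^ l)⁻¹ ≤ 2 := by
  simpa only [one_div, inv_pow] using sum_geometric_two_le n

theorem inv_two_mul_le_inv_two_pow_succ {n l : ℕ} (hl : l < Nat.clog 2 n) :
    (2 * n : ℝ)⁻¹ ≤ ((2 : ℝ) ^ (l + 1))⁻¹ := by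
  have := Nat.pow_lt_of_lt_clog hl
  gcongr
  rw [pow_succ']
  exact_mod_cast Nat.mul_le_mul_left 2 this.le

theorem logb_two_natCast_nonneg (n : ℕ) : 0 ≤ Real.logb 2 n := by
  rcases n.eq_zero_or_pos with rfl | hn
  · simp
  · exact Real.logb_nonneg one_lt_two (by exact_mod_cast hn)

theorem clog_two_le_logb_add_one (n : ℕ) : (Nat.clog 2 n : ℝ) ≤ Real.logb 2 n + 1 := by
  rw [← Real.natCeil_logb_natCast]
  push_cast
  exact (Nat.ceil_lt_add_one (logb_two_natCast_nonneg n)).le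

theorem clog_two_le_two_mul_logb (n : ℕ) : (Nat.clog 2 n : ℝ) ≤ 2 * Real.logb 2 n := by
  rcases le_or_gt n 1 with hn | hn
  · simpa [Nat.clog_of_right_le_one hn] using logb_two_natCast_nonneg n
  · have : 1 ≤ Real.logb 2 n := by
      rw [Real.le_logb_iff_rpow_le one_lt_two (by positivity)]
      exact_mod_cast hn
    linarith [clog_two_le_logb_add_one n]

theorem one_div_eight_mul_le_inv_two_mul {η : ℝ} (hη : 1 ≤ η) (K H : ℕ) :
    1 / (8 * η * K * H) ≤ (2 * (K * H : ℕ) : ℝ)⁻¹ := by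
  push_cast
  rcases (K * H).eq_zero_or_pos with hKH | hKH
  · have : (K : ℝ) * H = 0 := by exact_mod_cast hKH
    simp [mul_assoc, this]
  · have : (0 : ℝ) < K * H := by exact_mod_cast hKH
    rw [one_div]
    exact inv_anti₀ (by positivity) (by nlinarith)

theorem eight_mul_clog_two_le {η : ℝ} (hη : 1 ≤ η) (n : ℕ) :
    8 * (Nat.clog 2 n : ℝ) ≤ 13 * Real.logb 2 (4 * η * n) ^ 2 := by
  rcases n.eq_zero_or_pos with rfl | hn
  · simp
  have h4η : 2 ≤ Real.logb 2 (4 * η) := by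
    rw [Real.le_logb_iff_rpow_le one_lt_two (by positivity)]
    norm_num
    linarith
  have hy : (Nat.clog 2 n : ℝ) + 1 ≤ Real.logb 2 (4 * η * n) := by
    rw [Real.logb_mul (by positivity) (by positivity)]
    linarith [clog_two_le_logb_add_one n]
  nlinarith [(Nat.cast_nonneg (Nat.clog 2 n) : (0 : ℝ) ≤ _)]

section Episodes

-- `ι` lists all points in chronological order, `e i` is the episode of point `i`, and `g k` is
-- the function chosen in episode `k`.
variable {X ι κ : Type*} [LinearOrder ι] [Fintype ι] [LinearOrder κ] {Ψ : Set (X → ℝ)}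
  {ε₀ η : ℝ} {d : ℕ} {e : ι → κ} {x : ι → X} {g : κ → X → ℝ}

theorem sum_filter_lt_le_of_card_episode_le (hg0 : ∀ k y, 0 ≤ g k y) (he : Monotone e)
    (hprev : ∀ k, ∑ i with e i < k, g k (x i) ≤ η) {t : ℝ} {c : ℕ} {P : Finset ι}
    (hP : ∀ i ∈ P, g (e i) (x i) ≤ t) (hcnt : ∀ i ∈ P, #{j ∈ P | e j = e i} ≤ c + 1)
    {i : ι} (hi : i ∈ P) :
    ∑ j ∈ P with j < i, g (e i) (x j) ≤ η + c * t := by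
  rw [← sum_filter_add_sum_filter_not _ (e · < e i)]
  set Q := {j ∈ {j ∈ P | j < i} | ¬ e j < e i}
  have hsame : ∀ j ∈ Q, e j = e i := by
    simp only [Q, mem_filter, and_imp]
    exact fun j _ hji hnlt => (he hji.le).antisymm (not_lt.mp hnlt)
  have hQ : #Q ≤ c := by
    have hsub : Q ⊆ {j ∈ P | e j = e i}.erase i := fun j hj => by
      have hj' := mem_filter.mp (mem_filter.mp hj).1
      exact mem_erase.mpr ⟨hj'.2.ne, mem_filter.mpr ⟨hj'.1, hsame j hj⟩⟩
    have := card_le_card hsub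
    rw [card_erase_of_mem (mem_filter.mpr ⟨hi, rfl⟩ : i ∈ {j ∈ P | e j = e i})] at this
    have := hcnt i hi
    omega
  gcongr
  · refine (sum_le_sum_of_subset_of_nonneg (fun j hj => ?_) fun j _ _ => hg0 _ _).trans
      (hprev (e i))
    simpa using (mem_filter.mp hj).2
  · calc ∑ j ∈ Q, g (e i) (x j) ≤ #Q • t := sum_le_card_nsmul _ _ _ fun j hj => by
          rw [← hsame j hj]
          exact hP j (mem_filter.mp (mem_filter.mp hj).1).1
      _ ≤ c * t := by
          rw [nsmul_eq_mul]
          gcongr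
          exact (hg0 _ _).trans (hP i hi)

theorem card_le_of_card_episode_le (hd : EluderDimLE Ψ ε₀ d) (hgΨ : ∀ k, g k ∈ Ψ)
    (hg0 : ∀ k y, 0 ≤ g k y) (he : Monotone e) (hη : 0 ≤ η)
    (hprev : ∀ k, ∑ i with e i < k, g k (x i) ≤ η) {l c : ℕ}
    (hε₀ : ε₀ ≤ ((2 : ℝ) ^ (l + 1))⁻¹) (hc : (c : ℝ) ≤ η * 2 ^ l / 2) {P : Finset ι}
    (hP : ∀ i ∈ P, g (e i) (x i) ∈ dyadicShell l) (hcnt : ∀ i ∈ P, #{j ∈ P | e j = e i} ≤ c + 1) :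
    (#P : ℝ) ≤ (3 * η * 2 ^ l + 1) * d := by
  have h2l : (0 : ℝ) < 2 ^ l := by positivity
  have hB : 3 / 2 * η < (⌊3 * η * 2 ^ l⌋₊ + 1 : ℕ) * ((2 : ℝ) ^ (l + 1))⁻¹ := by
    rw [pow_succ, ← div_eq_mul_inv, lt_div_iff₀ (by positivity)]
    push_cast
    linarith [Nat.lt_floor_add_one (3 * η * 2 ^ l)]
  have hcard := hd.card_le_mul hε₀ hB (a := x) (φ := fun i => g (e i)) (fun i _ => hgΨ _)
    (fun i hi => by
      simp_rw [abs_of_nonneg (hg0 _ _)]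
      refine (sum_filter_lt_le_of_card_episode_le hg0 he hprev (fun j hj => (hP j hj).2) hcnt
        hi).trans ?_
      have : (c : ℝ) * ((2 : ℝ) ^ l)⁻¹ ≤ η / 2 := by
        rw [← div_eq_mul_inv, div_le_iff₀ h2l]
        linarith
      linarith)
    (fun i hi => (hP i hi).1.trans_le (le_abs_self _))
  calc (#P : ℝ) ≤ ((⌊3 * η * 2 ^ l⌋₊ + 1 : ℕ) * d : ℕ) := by exact_mod_cast hcard
    _ ≤ (3 * η * 2 ^ l + 1) * d := by
      push_cast
      gcongr
      exact Nat.floor_le (by positivity)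

variable [Fintype κ]

variable (η e x g) in
noncomputable def heavyEpisodes (l : ℕ) : Finset κ :=
  {k | ⌊η * 2 ^ l / 2⌋₊ < #{i | g (e i) (x i) ∈ dyadicShell l ∧ e i = k}}

theorem card_heavyEpisodes_le (hd : EluderDimLE Ψ ε₀ d) (hgΨ : ∀ k, g k ∈ Ψ)
    (hg0 : ∀ k y, 0 ≤ g k y) (he : Monotone e) (hη : 1 ≤ η)
    (hprev : ∀ k, ∑ i with e i < k, g k (x i) ≤ η) {l : ℕ}
    (hε₀ : ε₀ ≤ ((2 : ℝ) ^ (l + 1))⁻¹) :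
    #(heavyEpisodes η e x g l) ≤ 8 * d := by
  set c := ⌊η * 2 ^ l / 2⌋₊
  have hsample : ∀ k ∈ heavyEpisodes η e x g l,
      ∃ t ⊆ ({i | g (e i) (x i) ∈ dyadicShell l ∧ e i = k} : Finset ι), #t = c + 1 :=
    fun k hk => exists_subset_card_eq (mem_filter.mp hk).2
  choose! pick hpick hpickcard using hsample
  have hpick_mem : ∀ k ∈ heavyEpisodes η e x g l, ∀ i ∈ pick k,
      g (e i) (x i) ∈ dyadicShell l ∧ e i = k := fun k hk i hi => by
    simpa using hpick k hk hi
  set P := (heavyEpisodes η e x g l).biUnion pick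
  have hPcard : #P = #(heavyEpisodes η e x g l) * (c + 1) := by
    rw [card_biUnion fun k hk k' hk' hne => disjoint_left.mpr fun i hi hi' =>
      hne ((hpick_mem k hk i hi).2.symm.trans (hpick_mem k' hk' i hi').2), sum_congr rfl hpickcard,
      sum_const, smul_eq_mul]
  have hPle := card_le_of_card_episode_le hd hgΨ hg0 he (by linarith) hprev hε₀
    (Nat.floor_le (by positivity)) (P := P)
    (fun i hi => by
      obtain ⟨k, hk, hik⟩ := mem_biUnion.mp hi
      exact (hpick_mem k hk i hik).1)
    (fun i hi => by
      obtain ⟨k, hk, hik⟩ := mem_biUnion.mp hi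
      refine (card_le_card fun j hj => ?_).trans (hpickcard k hk).le
      obtain ⟨hjP, hji⟩ := mem_filter.mp hj
      obtain ⟨k', hk', hjk'⟩ := mem_biUnion.mp hjP
      obtain rfl : k' = k := by rw [← (hpick_mem k' hk' j hjk').2, hji, (hpick_mem k hk i hik).2]
      exact hjk')
  have hA : 1 ≤ η * 2 ^ l := by nlinarith [one_le_pow₀ (M₀ := ℝ) one_le_two (n := l)]
  have hc : η * 2 ^ l / 2 < c + 1 := Nat.lt_floor_add_one _
  rw [hPcard] at hPle
  push_cast at hPle
  suffices (#(heavyEpisodes η e x g l) : ℝ) ≤ 8 * d by exact_mod_cast this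
  refine le_of_mul_le_mul_right ?_ (by positivity : 0 < η * 2 ^ l / 2)
  calc (#(heavyEpisodes η e x g l) : ℝ) * (η * 2 ^ l / 2)
      ≤ #(heavyEpisodes η e x g l) * (c + 1) := by gcongr
    _ ≤ (3 * η * 2 ^ l + 1) * d := hPle
    _ ≤ 8 * d * (η * 2 ^ l / 2) := by nlinarith [(Nat.cast_nonneg d : (0 : ℝ) ≤ d)]

theorem sum_not_heavyEpisodes_le (hd : EluderDimLE Ψ ε₀ d) (hgΨ : ∀ k, g k ∈ Ψ)
    (hg0 : ∀ k y, 0 ≤ g k y) (he : Monotone e) (hη : 0 ≤ η)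
    (hprev : ∀ k, ∑ i with e i < k, g k (x i) ≤ η) {l : ℕ}
    (hε₀ : ε₀ ≤ ((2 : ℝ) ^ (l + 1))⁻¹) :
    ∑ i with g (e i) (x i) ∈ dyadicShell l ∧ e i ∉ heavyEpisodes η e x g l, g (e i) (x i) ≤
      3 * η * d + ((2 : ℝ) ^ l)⁻¹ * d := by
  set P : Finset ι := {i | g (e i) (x i) ∈ dyadicShell l ∧ e i ∉ heavyEpisodes η e x g l}
  have hcard := card_le_of_card_episode_le hd hgΨ hg0 he hη hprev hε₀
    (Nat.floor_le (by positivity)) (P := P)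
    (fun i hi => (mem_filter.mp hi).2.1)
    (fun i hi => by
      have hlight := (mem_filter.mp hi).2.2
      simp only [heavyEpisodes, mem_filter, mem_univ, true_and, not_lt] at hlight
      refine (card_le_card fun j hj => ?_).trans (hlight.trans (Nat.le_succ _))
      obtain ⟨hjP, hji⟩ := mem_filter.mp hj
      simpa [hji] using (mem_filter.mp hjP).2.1)
  calc ∑ i ∈ P, g (e i) (x i) ≤ #P • ((2 : ℝ) ^ l)⁻¹ :=
        sum_le_card_nsmul _ _ _ fun i hi => (mem_filter.mp hi).2.1.2
    _ ≤ (3 * η * 2 ^ l + 1) * d * ((2 : ℝ) ^ l)⁻¹ := by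
        rw [nsmul_eq_mul]
        gcongr
    _ = 3 * η * d + ((2 : ℝ) ^ l)⁻¹ * d := by
        field_simp

theorem exists_card_le_sum_compl_le (hd : EluderDimLE Ψ ε₀ d)
    (hε₀ : ε₀ ≤ (2 * Fintype.card ι : ℝ)⁻¹) (hgΨ : ∀ k, g k ∈ Ψ) (hg0 : ∀ k y, 0 ≤ g k y)
    (hg1 : ∀ k y, g k y ≤ 1) (he : Monotone e) (hη : 1 ≤ η)
    (hprev : ∀ k, ∑ i with e i < k, g k (x i) ≤ η) :
    ∃ 𝒦 : Finset κ, #𝒦 ≤ 8 * Nat.clog 2 (Fintype.card ι) * d ∧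
      ∑ i with e i ∉ 𝒦, g (e i) (x i) ≤ 3 * η * Nat.clog 2 (Fintype.card ι) * d + 2 * d + 1 := by
  set L := Nat.clog 2 (Fintype.card ι)
  have hscale (l : ℕ) (hl : l ∈ range L) : ε₀ ≤ ((2 : ℝ) ^ (l + 1))⁻¹ :=
    hε₀.trans (inv_two_mul_le_inv_two_pow_succ (mem_range.mp hl))
  refine ⟨(range L).biUnion (heavyEpisodes η e x g), ?_, ?_⟩
  · calc #((range L).biUnion (heavyEpisodes η e x g))
        ≤ ∑ l ∈ range L, #(heavyEpisodes η e x g l) := card_biUnion_le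
      _ ≤ ∑ _l ∈ range L, 8 * d := sum_le_sum fun l hl =>
          card_heavyEpisodes_le hd hgΨ hg0 he hη hprev (hscale l hl)
      _ = 8 * L * d := by rw [sum_const, card_range, smul_eq_mul]; ring
  · rw [sum_eq_sum_le_add_sum_dyadicShell (fun i _ => hg1 _ _) L]
    set 𝒦 := (range L).biUnion (heavyEpisodes η e x g)
    set s : Finset ι := {i | e i ∉ 𝒦}
    have hshell (l : ℕ) (hl : l ∈ range L) :
        ∑ i ∈ s with g (e i) (x i) ∈ dyadicShell l, g (e i) (x i) ≤
          3 * η * d + ((2 : ℝ) ^ l)⁻¹ * d := by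
      refine (sum_le_sum_of_subset_of_nonneg (fun i hi => ?_) fun i _ _ => hg0 _ _).trans
        (sum_not_heavyEpisodes_le hd hgΨ hg0 he (by linarith) hprev (hscale l hl))
      simp only [s, mem_filter, mem_univ, true_and] at hi ⊢
      exact ⟨hi.2, fun hheavy => hi.1 (mem_biUnion.mpr ⟨l, hl, hheavy⟩)⟩
    calc _ ≤ 1 + ∑ l ∈ range L, (3 * η * d + ((2 : ℝ) ^ l)⁻¹ * d) :=
          add_le_add (sum_filter_le_inv_two_pow_clog_card_le_one s _) (sum_le_sum hshell)
      _ = 3 * η * L * d + (∑ l ∈ range L, ((2 : ℝ) ^ l)⁻¹) * d + 1 := by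
          rw [sum_add_distrib, sum_const, card_range, nsmul_eq_mul, sum_mul]
          ring
      _ ≤ 3 * η * L * d + 2 * d + 1 := by
          gcongr
          exact sum_geometric_inv_two_le L

end Episodes

theorem sum_lex_filter_fst {α β M : Type*} [Fintype α] [Fintype β] [AddCommMonoid M]
    (p : α → Prop) [DecidablePred p] (f : α → β → M) :
    ∑ q : α ×ₗ β with p (ofLex q).1, f (ofLex q).1 (ofLex q).2 = ∑ a with p a, ∑ b, f a b := by
  rw [sum_filter, sum_filter, ← Equiv.sum_comp toLex, Fintype.sum_prod_type]
  refine sum_congr rfl fun a _ => ?_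
  split_ifs <;> simp [*]

theorem eluder_pigeon_general {X : Type*}
    (Ψ : Set (X → ℝ)) (hΨbdd : ∀ g ∈ Ψ, ∀ x, 0 ≤ g x ∧ g x ≤ 1)
    (η : ℝ) (hη : 1 < η) (K H : ℕ)
    (x : Fin K → Fin H → X)
    (g : Fin K → X → ℝ) (hg : ∀ k, g k ∈ Ψ)
    (hsum : ∀ k : Fin K, ∑ i ∈ Finset.Iio k, ∑ h, g k (x i h) ≤ η)
    (d : ℕ) (hd : EluderDimLE Ψ (1 / (8 * η * K * H)) d) :
    ∃ 𝒦 : Finset (Fin K),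
      (𝒦.card : ℝ) ≤ 13 * (Real.logb 2 (4 * η * K * H)) ^ 2 * d ∧
      ∑ k ∈ 𝒦ᶜ, ∑ h, g k (x k h) ≤ d * (2 + 7 * η * Real.logb 2 (K * H)) + 1 := by
  have hcard : Fintype.card (Fin K ×ₗ Fin H) = K * H := by simp
  obtain ⟨𝒦, h𝒦card, h𝒦sum⟩ := exists_card_le_sum_compl_le
    (e := fun q : Fin K ×ₗ Fin H => (ofLex q).1) (x := fun q => x (ofLex q).1 (ofLex q).2) hd
    (hcard ▸ one_div_eight_mul_le_inv_two_mul hη.le K H) hg (fun k y => (hΨbdd _ (hg k) y).1)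
    (fun k y => (hΨbdd _ (hg k) y).2) Prod.Lex.monotone_fst_ofLex hη.le fun k => by
      rw [sum_lex_filter_fst (· < k) (fun a b => g k (x a b)), filter_gt_eq_Iio]
      exact hsum k
  rw [hcard, sum_lex_filter_fst (· ∉ 𝒦) (fun a b => g a (x a b)), ← compl_filter,
    filter_mem_eq_inter, univ_inter] at h𝒦sum
  have hlog := clog_two_le_two_mul_logb (K * H)
  have hlog0 := logb_two_natCast_nonneg (K * H)
  have hclog := eight_mul_clog_two_le hη.le (K * H)
  push_cast at hlog hlog0 hclog
  refine ⟨𝒦, ?_, ?_⟩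
  · calc (#𝒦 : ℝ) ≤ 8 * Nat.clog 2 (K * H) * d := by exact_mod_cast hcard ▸ h𝒦card
      _ ≤ 13 * (Real.logb 2 (4 * η * K * H)) ^ 2 * d :=
        mul_le_mul_of_nonneg_right (by simpa only [mul_assoc] using hclog) d.cast_nonneg
  · have hηd : 0 ≤ η * d := by positivity
    nlinarith [mul_le_mul_of_nonneg_right hlog hηd, mul_nonneg hlog0 hηd]

/-- New Eluder Pigeon Lemma. -/
theorem eluder_pigeon {X : Type*} [Nonempty X]
    (Ψ : Set (X → ℝ)) (hΨne : Ψ.Nonempty) (hΨbdd : ∀ g ∈ Ψ, ∀ x, 0 ≤ g x ∧ g x ≤ 1)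
    (η : ℝ) (hη : 1 < η) (K H : ℕ) (hK : 1 ≤ K) (hH : 1 ≤ H)
    (x : Fin K → Fin H → X)
    (g : Fin K → X → ℝ) (hg : ∀ k, g k ∈ Ψ)
    (hsum : ∀ k : Fin K, ∑ i ∈ Finset.Iio k, ∑ h, g k (x i h) ≤ η)
    (d : ℕ) (hd : EluderDimLE Ψ (1 / (8 * η * K * H)) d) :
    ∃ 𝒦 : Finset (Fin K),
      (𝒦.card : ℝ) ≤ 13 * (Real.logb 2 (4 * η * K * H)) ^ 2 * d ∧
      ∑ k ∈ 𝒦ᶜ, ∑ h, g k (x k h) ≤ d * (2 + 7 * η * Real.logb 2 (K * H)) + 1 :=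
  eluder_pigeon_general Ψ hΨbdd η hη K H x g hg hsum d hd
end
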